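/- Let θ be inner and g ∈ L^∞(T). If ker A_g^θ contains a function which does not vanish at 0, then ker A_g^θ is a nearly S*-invariant subspace of H². -/

import Mathlib

open MeasureTheory Complex Real
open scoped ENNReal ComplexConjugate

noncomputable section

namespace Paper

instance : Fact (0 < 2 * Real.pi) := ⟨by positivity⟩

abbrev Tc : Type := AddCircle (2 * Real.pi)
abbrev μ0 : MeasureTheory.Measure Tc := AddCircle.haarAddCircle
abbrev L2 : Type := MeasureTheory.Lp ℂ 2 μ0

def coeffCLM (n : ℤ) : L2 →L[ℂ] ℂ :=
  LinearMap.mkContinuous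
    { toFun := fun f => fourierBasis.repr f n
      map_add' := fun f g => by simp
      map_smul' := fun c f => by simp }
    1
    (fun f => by
      have h := lp.norm_apply_le_norm (p := 2) (by norm_num) (fourierBasis.repr f) n
      simpa using h)

def cf (f : L2) (n : ℤ) : ℂ := coeffCLM n f

/-- The subspace of `L²(𝕋)` of functions whose Fourier coefficients of index `< k` vanish.
Thus `coeffGE 0 = H²` and `coeffGE k = zᵏH²` for `k ≥ 0`. -/
def coeffGE (k : ℤ) : Submodule ℂ L2 :=
  ⨅ (n : ℤ) (_ : n < k), LinearMap.ker (coeffCLM n : L2 →ₗ[ℂ] ℂ)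

/-- The subspace of `L²(𝕋)` of functions whose Fourier coefficients of index `≥ k` vanish.
Thus `coeffLT 0 = conj (H²₀) = (H²)^⊥`. -/
def coeffLT (k : ℤ) : Submodule ℂ L2 :=
  ⨅ (n : ℤ) (_ : k ≤ n), LinearMap.ker (coeffCLM n : L2 →ₗ[ℂ] ℂ)

/-- The Hardy space `H²` of the unit disc, viewed as a subspace of `L²(𝕋)`. -/
def H2 : Submodule ℂ L2 := coeffGE 0

lemma mem_coeffGE {k : ℤ} {f : L2} : f ∈ coeffGE k ↔ ∀ n < k, cf f n = 0 := by
  simp [coeffGE, cf, Submodule.mem_iInf, LinearMap.mem_ker]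

lemma isClosed_coeffGE (k : ℤ) : IsClosed ((coeffGE k : Submodule ℂ L2) : Set L2) := by
  have h : ((coeffGE k : Submodule ℂ L2) : Set L2)
      = ⋂ (n : ℤ) (_ : n < k), (LinearMap.ker (coeffCLM n : L2 →ₗ[ℂ] ℂ) : Set L2) := by
    ext f
    simp [coeffGE, Submodule.mem_iInf, Set.mem_iInter]
  rw [h]
  exact isClosed_iInter fun n => isClosed_iInter fun _ => ContinuousLinearMap.isClosed_ker (coeffCLM n)

end Paper
namespace Paper

open scoped Classical in
/-- Multiplication by an `L^∞` function, as a linear map on `L²(𝕋)` (defined to be `0` if the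
symbol is not essentially bounded). -/
def mulLM (g : Tc → ℂ) : L2 →ₗ[ℂ] L2 :=
  if hg : MemLp g ⊤ μ0 then
    { toFun := fun f => ((Lp.memLp f).smul (r := 2) hg).toLp (g • ⇑f)
      map_add' := fun f₁ f₂ => by
        apply Lp.ext
        filter_upwards [MemLp.coeFn_toLp ((Lp.memLp (f₁ + f₂)).smul (r := 2) hg),
          MemLp.coeFn_toLp ((Lp.memLp f₁).smul (r := 2) hg),
          MemLp.coeFn_toLp ((Lp.memLp f₂).smul (r := 2) hg),
          Lp.coeFn_add f₁ f₂,
          Lp.coeFn_add (((Lp.memLp f₁).smul (r := 2) hg).toLp (g • ⇑f₁))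
            (((Lp.memLp f₂).smul (r := 2) hg).toLp (g • ⇑f₂))] with x h0 h1 h2 h3 h4
        rw [h0, h4, Pi.add_apply, h1, h2]
        simp only [Pi.smul_apply', Pi.add_apply, h3, smul_add]
      map_smul' := fun c f => by
        apply Lp.ext
        filter_upwards [MemLp.coeFn_toLp ((Lp.memLp (c • f)).smul (r := 2) hg),
          MemLp.coeFn_toLp ((Lp.memLp f).smul (r := 2) hg),
          Lp.coeFn_smul c f,
          Lp.coeFn_smul c (((Lp.memLp f).smul (r := 2) hg).toLp (g • ⇑f))] with x h0 h1 h3 h4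
        simp only [RingHom.id_apply]
        rw [h0, h4, Pi.smul_apply, h1]
        simp only [Pi.smul_apply', Pi.smul_apply, h3]
        exact smul_comm _ _ _ }
  else 0

end Paper
namespace Paper

/-- The orthogonal projection of `L²(𝕋)` onto a closed subspace, as a map `L² → L²`. -/
def projCLM (U : Submodule ℂ L2) (hU : IsClosed (U : Set L2)) : L2 →L[ℂ] L2 :=
  letI : CompleteSpace U := hU.completeSpace_coe
  U.subtypeL.comp U.orthogonalProjectionOnto

/-- The subspace `θH²` of `L²(𝕋)`. -/
def thetaH2 (θ : Tc → ℂ) : Submodule ℂ L2 := H2.map (mulLM θ)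

/-- The model space `K_θ = H² ⊖ θH²`. -/
def Kmod (θ : Tc → ℂ) : Submodule ℂ L2 := H2 ⊓ (thetaH2 θ)ᗮ

lemma isClosed_Kmod (θ : Tc → ℂ) : IsClosed ((Kmod θ : Submodule ℂ L2) : Set L2) :=
  (isClosed_coeffGE 0).inter (thetaH2 θ).isClosed_orthogonal

/-- The orthogonal projection `P_θ : L² → K_θ` (composed with the inclusion back into `L²`). -/
def Ptheta (θ : Tc → ℂ) : L2 →L[ℂ] L2 := projCLM (Kmod θ) (isClosed_Kmod θ)

/-- The orthogonal projection `P₊ : L² → H²`. -/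
def Pplus : L2 →L[ℂ] L2 := projCLM H2 (isClosed_coeffGE 0)

/-- The independent variable `z = e^{it}`, as a function on the circle. -/
def zf : Tc → ℂ := fun x => fourier 1 x

/-- The conjugate variable `z̄ = e^{-it}`. -/
def zbar : Tc → ℂ := fun x => fourier (-1) x

lemma memLp_fourier (n : ℤ) : MemLp (fun x : Tc => (fourier n x : ℂ)) ⊤ μ0 := by
  refine memLp_top_of_bound ((fourier n).continuous.aestronglyMeasurable) 1 ?_
  exact Filter.Eventually.of_forall fun x => le_of_eq (Circle.norm_coe _)

lemma memLp_zf : MemLp zf ⊤ μ0 := memLp_fourier 1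

lemma memLp_zbar : MemLp zbar ⊤ μ0 := memLp_fourier (-1)

/-- The backward shift `S* : f ↦ (f - f(0))/z`, realised on `L²(𝕋)` as
`f ↦ P₊(z̄ f)`; on `H²` this is the usual backward shift. -/
def Sstar : L2 →ₗ[ℂ] L2 := (Pplus : L2 →ₗ[ℂ] L2).comp (mulLM zbar)

/-- `θ` is an inner function: it is essentially bounded, unimodular a.e. on the circle, and
all its negative Fourier coefficients vanish (i.e. it is the boundary function of a bounded
analytic function on the disc). -/
structure IsInner (θ : Tc → ℂ) : Prop where
  memLinf : MemLp θ ⊤ μ0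
  unimodular : ∀ᵐ x ∂μ0, ‖θ x‖ = 1
  analytic : ∀ n : ℤ, n < 0 → fourierCoeff θ n = 0

/-- Pointwise complex conjugation of a function on the circle. -/
def conjFun (f : Tc → ℂ) : Tc → ℂ := fun x => (starRingEnd ℂ) (f x)

lemma memLp_conj {f : Tc → ℂ} {p : ℝ≥0∞} (hf : MemLp f p μ0) : MemLp (conjFun f) p μ0 := by
  refine ⟨continuous_star.comp_aestronglyMeasurable hf.1, ?_⟩
  have h : eLpNorm (conjFun f) p μ0 = eLpNorm f p μ0 :=
    eLpNorm_congr_norm_ae (Filter.Eventually.of_forall fun x => by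
      simp [conjFun])
  rw [h]
  exact hf.2

/-- Complex conjugation on `L²(𝕋)`. -/
def conjL2 (f : L2) : L2 := (memLp_conj (Lp.memLp f)).toLp (conjFun ⇑f)

end Paper
namespace Paper

/-- The set `w·U = {h ∈ L² : h = w·k (a.e.) for some k ∈ U}`, for a fixed function `w` on the
circle and a subspace `U ⊆ L²`; this is a (not necessarily closed) subspace of `L²`. -/
def mulSet (w : Tc → ℂ) (U : Submodule ℂ L2) : Submodule ℂ L2 where
  carrier := {h : L2 | ∃ k ∈ U, (⇑h : Tc → ℂ) =ᵐ[μ0] fun x => w x * (⇑k : Tc → ℂ) x}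
  add_mem' := by
    rintro a b ⟨k₁, hk₁, ha⟩ ⟨k₂, hk₂, hb⟩
    refine ⟨k₁ + k₂, U.add_mem hk₁ hk₂, ?_⟩
    filter_upwards [ha, hb, Lp.coeFn_add a b, Lp.coeFn_add k₁ k₂] with x h1 h2 h3 h4
    simp only [h3, Pi.add_apply, h1, h2, h4, mul_add]
  zero_mem' := by
    refine ⟨0, U.zero_mem, ?_⟩
    filter_upwards [Lp.coeFn_zero ℂ 2 μ0] with x h1
    simp [h1]
  smul_mem' := by
    rintro c a ⟨k, hk, ha⟩
    refine ⟨c • k, U.smul_mem c hk, ?_⟩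
    filter_upwards [ha, Lp.coeFn_smul c a, Lp.coeFn_smul c k] with x h1 h2 h3
    simp only [h2, Pi.smul_apply, h1, h3, smul_eq_mul]
    ring

/-- `f` is an outer function: `f ∈ H²` and the polynomial multiples of `f` are dense in `H²`
(i.e. `f` is cyclic for the forward shift). -/
def IsOuter (f : L2) : Prop :=
  f ∈ H2 ∧
    (Submodule.span ℂ (Set.range fun k : ℕ => ((mulLM zf) ^ k) f)).topologicalClosure = H2

/-- `h` is a cyclic vector for the backward shift `S*` on `H²`. -/
def CyclicSstar (h : L2) : Prop :=
  (Submodule.span ℂ (Set.range fun k : ℕ => (Sstar ^ k) h)).topologicalClosure = H2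

/-- `d` divides `u` in the sense of inner functions. -/
def InnerDvd (d u : Tc → ℂ) : Prop :=
  ∃ v : Tc → ℂ, IsInner v ∧ ∀ᵐ x ∂μ0, u x = d x * v x

/-- Two inner functions have greatest common inner divisor `1`, i.e. every common inner
divisor is a (necessarily unimodular) constant. -/
def CoprimeInner (u₁ u₂ : Tc → ℂ) : Prop :=
  ∀ d : Tc → ℂ, IsInner d → InnerDvd d u₁ → InnerDvd d u₂ → ∃ c : ℂ, ∀ᵐ x ∂μ0, d x = c

/-- The kernel of the truncated Toeplitz operator `A_g^θ = P_θ (g ·) : K_θ → K_θ`: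
`f ∈ ker A_g^θ` iff `f ∈ K_θ` and `g f ⊥ K_θ`. -/
def kerA (θ g : Tc → ℂ) : Submodule ℂ L2 :=
  Kmod θ ⊓ ((Kmod θ)ᗮ).comap (mulLM g)

/-- The kernel of the dual truncated Toeplitz operator `D_g^θ = Q (g ·) : K_θ^⊥ → K_θ^⊥`:
`f ∈ ker D_g^θ` iff `f ∈ K_θ^⊥` and `g f ⊥ K_θ^⊥`. -/
def kerD (θ g : Tc → ℂ) : Submodule ℂ L2 :=
  (Kmod θ)ᗮ ⊓ (((Kmod θ)ᗮ)ᗮ).comap (mulLM g)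

/-- The space `A = {f ∈ ker D_g^θ : gf ∈ K_θ ∩ zH²}`. -/
def dualA (θ g : Tc → ℂ) : Submodule ℂ L2 :=
  kerD θ g ⊓ (Kmod θ ⊓ coeffGE 1).comap (mulLM g)

/-- The space `C = ker D_g^θ ∩ (conj H²₀ ⊕ θzH²) ∩ A`. -/
def dualC (θ g : Tc → ℂ) : Submodule ℂ L2 :=
  kerD θ g ⊓ (coeffLT 0 ⊔ (coeffGE 1).map (mulLM θ)) ⊓ dualA θ g

end Paper
namespace Paper

/-- The vector-valued space `L²(𝕋, ℂⁿ)`, realised as an `ℓ²`-direct sum of `n` copies of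
`L²(𝕋)`; the subspace `H2v n` below is the vector-valued Hardy space `H²(𝔻, ℂⁿ)`. -/
abbrev Vec (n : ℕ) : Type := PiLp 2 (fun _ : Fin n => L2)

/-- The `i`-th component, as a linear map `L²(𝕋, ℂⁿ) → L²(𝕋)`. -/
def compLM {n : ℕ} (i : Fin n) : Vec n →ₗ[ℂ] L2 where
  toFun F := F i
  map_add' F G := rfl
  map_smul' c F := rfl

/-- Vector-valued analogue of `coeffGE`: `coeffGEv n 0 = H²(𝔻, ℂⁿ)` and
`coeffGEv n 1 = zH²(𝔻, ℂⁿ)`. -/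
def coeffGEv (n : ℕ) (k : ℤ) : Submodule ℂ (Vec n) :=
  ⨅ i : Fin n, (coeffGE k).comap (compLM i)

/-- The vector-valued Hardy space `H²(𝔻, ℂⁿ)`. -/
def H2v (n : ℕ) : Submodule ℂ (Vec n) := coeffGEv n 0

/-- The vector-valued model space `K_θ(𝔻, ℂⁿ)` (all components in `K_θ`). -/
def Kv (θ : Tc → ℂ) (n : ℕ) : Submodule ℂ (Vec n) :=
  ⨅ i : Fin n, (Kmod θ).comap (compLM i)

/-- Evaluation at the origin, `F ↦ F(0)`, for (Hardy-space) elements of `L²(𝕋, ℂⁿ)`. -/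
def ev0 {n : ℕ} (F : Vec n) : EuclideanSpace ℂ (Fin n) := WithLp.toLp 2 (fun i => cf (F i) 0)

/-- Evaluation at the origin as a linear map `H²(𝔻, ℂⁿ) → ℂⁿ`. -/
def ev0LM (n : ℕ) : Vec n →ₗ[ℂ] EuclideanSpace ℂ (Fin n) where
  toFun := ev0
  map_add' _F _G := by
    ext i
    simp [ev0, cf]
  map_smul' _c _F := by
    ext i
    simp [ev0, cf]

/-- The componentwise backward shift on `L²(𝕋, ℂⁿ)`. -/
def SstarV {n : ℕ} : Vec n →ₗ[ℂ] Vec n where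
  toFun F := WithLp.toLp 2 (fun i => Sstar (F i))
  map_add' _F _G := by
    ext i
    simp
  map_smul' _c _F := by
    ext i
    simp

/-- Componentwise multiplication by a scalar `L^∞` function on `L²(𝕋, ℂⁿ)`. -/
def mulVLM (g : Tc → ℂ) {n : ℕ} : Vec n →ₗ[ℂ] Vec n where
  toFun F := WithLp.toLp 2 (fun i => mulLM g (F i))
  map_add' _F _G := by
    ext i
    simp
  map_smul' _c _F := by
    ext i
    simp

/-- The projection onto the first `i` coordinates, `P_i : H²(𝔻, ℂⁿ) → H²(𝔻, ℂⁱ)`. -/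
def projLE {n i : ℕ} (h : i ≤ n) : Vec n →ₗ[ℂ] Vec i where
  toFun F := WithLp.toLp 2 (fun j => F (Fin.castLE h j))
  map_add' F G := rfl
  map_smul' c F := rfl

/-- The `i`-th row of a matrix symbol applied to a vector function:
`F ↦ ∑ j, G i j • F j`. -/
def rowLM {n : ℕ} (G : Matrix (Fin n) (Fin n) (Tc → ℂ)) (i : Fin n) : Vec n →ₗ[ℂ] L2 :=
  ∑ j : Fin n, (mulLM (G i j)).comp (compLM j)

/-- The kernel of the block Toeplitz operator `T_G = P₊(G ·)` on `H²(𝔻, ℂⁿ)`: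
`F ∈ ker T_G` iff `F ∈ H²(𝔻, ℂⁿ)` and every component of `GF` is orthogonal to `H²`. -/
def kerT {n : ℕ} (G : Matrix (Fin n) (Fin n) (Tc → ℂ)) : Submodule ℂ (Vec n) :=
  H2v n ⊓ ⨅ i : Fin n, (H2ᗮ).comap (rowLM G i)

/-- The kernel of the matrix truncated Toeplitz operator `A_G^θ = P_θ(G ·)` on `K_θ(𝔻, ℂ²)`. -/
def kerAv (θ : Tc → ℂ) (G : Matrix (Fin 2) (Fin 2) (Tc → ℂ)) : Submodule ℂ (Vec 2) :=
  Kv θ 2 ⊓ ⨅ i : Fin 2, ((Kmod θ)ᗮ).comap (rowLM G i)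

/-- The scalar-type space `w·U ⊆ L²(𝕋, ℂⁿ)`, for a fixed vector function `w` and a
subspace `U ⊆ L²(𝕋)` of scalar functions. -/
def vecMulSet {n : ℕ} (w : Vec n) (U : Submodule ℂ L2) : Submodule ℂ (Vec n) where
  carrier := {F | ∃ k ∈ U, ∀ i : Fin n,
    (⇑(F i) : Tc → ℂ) =ᵐ[μ0] fun x => (⇑(w i) : Tc → ℂ) x * (⇑k : Tc → ℂ) x}
  add_mem' := by
    rintro a b ⟨k₁, hk₁, ha⟩ ⟨k₂, hk₂, hb⟩
    refine ⟨k₁ + k₂, U.add_mem hk₁ hk₂, fun i => ?_⟩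
    have hab : (a + b) i = a i + b i := rfl
    rw [hab]
    filter_upwards [ha i, hb i, Lp.coeFn_add (a i) (b i), Lp.coeFn_add k₁ k₂]
      with x h1 h2 h3 h4
    simp only [h3, Pi.add_apply, h1, h2, h4, mul_add]
  zero_mem' := by
    refine ⟨0, U.zero_mem, fun i => ?_⟩
    have h0 : (0 : Vec n) i = 0 := rfl
    rw [h0]
    filter_upwards [Lp.coeFn_zero ℂ 2 μ0] with x h1
    simp [h1]
  smul_mem' := by
    rintro c a ⟨k, hk, ha⟩
    refine ⟨c • k, U.smul_mem c hk, fun i => ?_⟩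
    have hc : (c • a) i = c • (a i) := rfl
    rw [hc]
    filter_upwards [ha i, Lp.coeFn_smul c (a i), Lp.coeFn_smul c k] with x h1 h2 h3
    simp only [h2, Pi.smul_apply, h1, h3, smul_eq_mul]
    ring

end Paper
namespace Paper

/-- The representation `F = F₀ k₀ + z ∑ⱼ kⱼ eⱼ` of Theorem 3.4(1): here the columns of `F₀`
are `W 0, …, W (r-1)`, the `eⱼ` are an orthonormal basis of the defect space, and the
parameter `k = (k₀, k₁, …, k_m)` runs through a subspace of `H²(𝔻, ℂ^{r+m})`. -/
def rep1 {n r m : ℕ} (W : Fin r → Vec n) (e : Fin m → Vec n) (k : Vec (r + m)) (F : Vec n) :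
    Prop :=
  ∀ i : Fin n,
    (⇑(F i) : Tc → ℂ) =ᵐ[μ0] fun x =>
      (∑ j : Fin r, (⇑(k (Fin.castAdd m j)) : Tc → ℂ) x * (⇑(W j i) : Tc → ℂ) x) +
        zf x * ∑ j : Fin m, (⇑(k (Fin.natAdd r j)) : Tc → ℂ) x * (⇑(e j i) : Tc → ℂ) x

/-- The representation `F = z ∑ⱼ kⱼ eⱼ` of Theorem 3.4(2). -/
def rep2 {n m : ℕ} (e : Fin m → Vec n) (k : Vec m) (F : Vec n) : Prop :=
  ∀ i : Fin n,
    (⇑(F i) : Tc → ℂ) =ᵐ[μ0] fun x =>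
      zf x * ∑ j : Fin m, (⇑(k j) : Tc → ℂ) x * (⇑(e j i) : Tc → ℂ) x

end Paper
namespace Paper

/-! For `f ∈ ker A_g^θ` with `f(0) = 0` the backward shift is `S*f = z̄f`, which lies in `K_θ`,
and `⟨k, g z̄ f⟩ = ⟨zk, gf⟩` for `k ∈ K_θ`. Since `zk ∈ K_θ + ℂθ`, everything reduces to
`gf ⊥ θ`. Here the function `f₁ ∈ ker A_g^θ` with `f₁(0) ≠ 0` enters: `a ↦ θā - conj(a(0)) θ`
maps `K_θ` into itself, and `⟨θ f̄₁, gf⟩ = ⟨θ f̄, gf₁⟩`, where `θ f̄ ∈ K_θ` because `f(0) = 0`.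
Pairing `gf ⊥ K_θ` with the image of `f₁` and `gf₁ ⊥ K_θ` with `θ f̄` gives
`f₁(0) ⟨θ, gf⟩ = 0`. -/

local notation "⟪" x ", " y "⟫" => @inner ℂ _ _ x y

lemma cf_def (f : L2) (n : ℤ) : cf f n = fourierBasis.repr f n := rfl

lemma cf_eq_fourierCoeff (f : L2) (n : ℤ) : cf f n = fourierCoeff (⇑f) n := by
  rw [cf_def, fourierBasis_repr]

lemma cf_eq_fourierCoeff_of_ae {f : L2} {F : Tc → ℂ} (h : ⇑f =ᵐ[μ0] F) (n : ℤ) :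
    cf f n = fourierCoeff F n := by
  rw [cf_eq_fourierCoeff]
  exact integral_congr_ae (h.mono fun x hx => by simp only [hx])

lemma inner_eq_integral (a b : L2) : ⟪a, b⟫ = ∫ x, conj (a x) * b x ∂μ0 := by
  rw [MeasureTheory.L2.inner_def]
  simp only [RCLike.inner_apply']

lemma inner_eq_inner_of_ae {a b c d : L2}
    (h : ∀ᵐ x ∂μ0, conj (a x) * b x = conj (c x) * d x) : ⟪a, b⟫ = ⟪c, d⟫ := by
  rw [inner_eq_integral, inner_eq_integral]
  exact integral_congr_ae h

lemma inner_eq_tsum_cf (a b : L2) : ⟪a, b⟫ = ∑' n : ℤ, conj (cf a n) * cf b n := by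
  rw [← fourierBasis.tsum_inner_mul_inner a b]
  refine tsum_congr fun n => ?_
  rw [cf_def, cf_def, fourierBasis.repr_apply_apply, fourierBasis.repr_apply_apply,
    inner_conj_symm]

lemma inner_eq_conj_cf_zero_mul_cf_zero {a b : L2}
    (h : ∀ n : ℤ, n ≠ 0 → conj (cf a n) * cf b n = 0) :
    ⟪a, b⟫ = conj (cf a 0) * cf b 0 :=
  (inner_eq_tsum_cf a b).trans (tsum_eq_single 0 h)

lemma coeFn_mulLM {g : Tc → ℂ} (hg : MemLp g ⊤ μ0) (f : L2) :
    ⇑(mulLM g f) =ᵐ[μ0] fun x => g x * f x := by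
  have h : mulLM g f = ((Lp.memLp f).smul (r := 2) hg).toLp (g • ⇑f) := by
    simp only [mulLM, dif_pos hg]
    rfl
  rw [h]
  exact MemLp.coeFn_toLp _

lemma coeFn_conjL2 (f : L2) : ⇑(conjL2 f) =ᵐ[μ0] fun x => conj (f x) :=
  (memLp_conj (Lp.memLp f)).coeFn_toLp

def fourE (m : ℤ) : L2 := fourierLp 2 m

lemma coeFn_fourE (m : ℤ) : ⇑(fourE m) =ᵐ[μ0] fun x => fourier m x :=
  coeFn_fourierLp 2 m

lemma cf_fourE (m n : ℤ) : cf (fourE m) n = if n = m then 1 else 0 := by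
  have h : fourE m = fourierBasis m := (congrFun coe_fourierBasis m).symm
  rw [cf_def, h, fourierBasis.repr_self, lp.single_apply, Pi.single_apply]

lemma fourE_mem_H2 {m : ℤ} (hm : 0 ≤ m) : fourE m ∈ H2 :=
  mem_coeffGE.mpr fun n hn => by rw [cf_fourE, if_neg (by omega)]

lemma cf_mulLM_zbar (f : L2) (n : ℤ) : cf (mulLM zbar f) n = cf f (n + 1) := by
  rw [cf_eq_fourierCoeff_of_ae (coeFn_mulLM memLp_zbar f) n, cf_eq_fourierCoeff]
  refine integral_congr_ae (Filter.Eventually.of_forall fun x => ?_)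
  simp only [smul_eq_mul, zbar, show -(n + 1) = -n + -1 by ring, fourier_add]
  ring

lemma cf_mulLM_zf (f : L2) (n : ℤ) : cf (mulLM zf f) n = cf f (n - 1) := by
  rw [cf_eq_fourierCoeff_of_ae (coeFn_mulLM memLp_zf f) n, cf_eq_fourierCoeff]
  refine integral_congr_ae (Filter.Eventually.of_forall fun x => ?_)
  simp only [smul_eq_mul, zf, show -(n - 1) = -n + 1 by ring, fourier_add]
  ring

lemma mulLM_zf_mem_H2 {f : L2} (hf : f ∈ H2) : mulLM zf f ∈ H2 :=
  mem_coeffGE.mpr fun n hn => by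
    rw [cf_mulLM_zf]
    exact mem_coeffGE.mp hf _ (by omega)

lemma cf_conjL2 (a : L2) (n : ℤ) : cf (conjL2 a) n = conj (cf a (-n)) := by
  rw [cf_eq_fourierCoeff_of_ae (coeFn_conjL2 a) n, cf_eq_fourierCoeff, fourierCoeff,
    fourierCoeff, ← integral_conj]
  refine integral_congr_ae (Filter.Eventually.of_forall fun x => ?_)
  simp only [smul_eq_mul, map_mul, ← fourier_neg, neg_neg]

lemma conj_mul_self_of_norm_eq_one {z : ℂ} (hz : ‖z‖ = 1) : conj z * z = 1 := by
  rw [Complex.conj_mul', hz]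
  norm_num

lemma mem_Kmod_iff {θ : Tc → ℂ} {f : L2} :
    f ∈ Kmod θ ↔ f ∈ H2 ∧ ∀ h ∈ H2, ⟪mulLM θ h, f⟫ = 0 := by
  simp only [Kmod, thetaH2, Submodule.mem_inf, Submodule.mem_orthogonal, Submodule.mem_map,
    forall_exists_index, and_imp, forall_apply_eq_imp_iff₂]

lemma coeFn_mulLM_fourE_zero {θ : Tc → ℂ} (hθ : MemLp θ ⊤ μ0) :
    ⇑(mulLM θ (fourE 0)) =ᵐ[μ0] θ := by
  filter_upwards [coeFn_mulLM hθ (fourE 0), coeFn_fourE 0] with x h1 h2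
  rw [h1, h2, fourier_zero, mul_one]

lemma mulLM_fourE_zero_mem_H2 {θ : Tc → ℂ} (hθ : IsInner θ) : mulLM θ (fourE 0) ∈ H2 :=
  mem_coeffGE.mpr fun n hn => by
    rw [cf_eq_fourierCoeff_of_ae (coeFn_mulLM_fourE_zero hθ.memLinf) n]
    exact hθ.analytic n hn

lemma inner_mulLM_mulLM_fourE_zero {θ : Tc → ℂ} (hθ : IsInner θ) (h : L2) :
    ⟪mulLM θ h, mulLM θ (fourE 0)⟫ = conj (cf h 0) := by
  rw [cf_eq_fourierCoeff, fourierCoeff, inner_eq_integral, ← integral_conj]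
  refine integral_congr_ae ?_
  filter_upwards [coeFn_mulLM hθ.memLinf h, coeFn_mulLM_fourE_zero hθ.memLinf,
    hθ.unimodular] with x h1 h2 h3
  simp only [h1, h2, neg_zero, fourier_zero, one_smul, map_mul]
  linear_combination conj (h x) * conj_mul_self_of_norm_eq_one h3

lemma fourierCoeff_conj_mul_eq_zero_of_mem_Kmod {θ : Tc → ℂ} (hθ : MemLp θ ⊤ μ0) {k : L2}
    (hk : k ∈ Kmod θ) {m : ℤ} (hm : 0 ≤ m) :
    fourierCoeff (fun x => conj (θ x) * k x) m = 0 := by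
  rw [← (mem_Kmod_iff.mp hk).2 (fourE m) (fourE_mem_H2 hm), inner_eq_integral, fourierCoeff]
  refine integral_congr_ae ?_
  filter_upwards [coeFn_mulLM hθ (fourE m), coeFn_fourE m] with x h1 h2
  simp only [smul_eq_mul, h1, h2, map_mul, ← fourier_neg]
  ring

lemma exists_mulLM_zf_sub_smul_mem_Kmod {θ : Tc → ℂ} (hθ : IsInner θ) {k : L2}
    (hk : k ∈ Kmod θ) : ∃ c : ℂ, mulLM zf k - c • mulLM θ (fourE 0) ∈ Kmod θ := by
  set B : L2 := mulLM zf (mulLM (conjFun θ) k)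
  have hB : ∀ n : ℤ, 1 ≤ n → cf B n = 0 := fun n hn => by
    rw [cf_mulLM_zf, cf_eq_fourierCoeff_of_ae (coeFn_mulLM (memLp_conj hθ.memLinf) k)]
    exact fourierCoeff_conj_mul_eq_zero_of_mem_Kmod hθ.memLinf hk (by omega)
  refine ⟨cf B 0, mem_Kmod_iff.mpr ⟨?_, fun h hh => ?_⟩⟩
  · exact sub_mem (mulLM_zf_mem_H2 (mem_Kmod_iff.mp hk).1)
      (Submodule.smul_mem _ _ (mulLM_fourE_zero_mem_H2 hθ))
  have h_adj : ⟪mulLM θ h, mulLM zf k⟫ = ⟪h, B⟫ := by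
    refine inner_eq_inner_of_ae ?_
    filter_upwards [coeFn_mulLM hθ.memLinf h, coeFn_mulLM memLp_zf k,
      coeFn_mulLM memLp_zf (mulLM (conjFun θ) k), coeFn_mulLM (memLp_conj hθ.memLinf) k]
      with x e1 e2 e3 e4
    rw [e1, e2, e3, e4]
    simp only [map_mul, conjFun]
    ring
  have h_single : ⟪h, B⟫ = conj (cf h 0) * cf B 0 :=
    inner_eq_conj_cf_zero_mul_cf_zero fun n hn => by
      rcases hn.lt_or_gt with hn | hn
      · rw [mem_coeffGE.mp hh n hn, map_zero, zero_mul]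
      · rw [hB n hn, mul_zero]
  rw [inner_sub_right, inner_smul_right, h_adj, h_single, inner_mulLM_mulLM_fourE_zero hθ]
  ring

lemma mulLM_conjL2_sub_smul_mem_Kmod {θ : Tc → ℂ} (hθ : IsInner θ) {a : L2}
    (ha : a ∈ Kmod θ) : mulLM θ (conjL2 a) - conj (cf a 0) • mulLM θ (fourE 0) ∈ Kmod θ := by
  have hcoe : ⇑(mulLM θ (conjL2 a)) =ᵐ[μ0] fun x => θ x * conj (a x) := by
    filter_upwards [coeFn_mulLM hθ.memLinf (conjL2 a), coeFn_conjL2 a] with x e1 e2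
    rw [e1, e2]
  refine mem_Kmod_iff.mpr ⟨sub_mem (mem_coeffGE.mpr fun n hn => ?_)
    (Submodule.smul_mem _ _ (mulLM_fourE_zero_mem_H2 hθ)), fun h hh => ?_⟩
  · have h_conj : fourierCoeff (fun x => θ x * conj (a x)) n
        = conj (fourierCoeff (fun x => conj (θ x) * a x) (-n)) := by
      rw [fourierCoeff, fourierCoeff, ← integral_conj]
      refine integral_congr_ae (Filter.Eventually.of_forall fun x => ?_)
      simp only [smul_eq_mul, neg_neg, map_mul, Complex.conj_conj, ← fourier_neg]
    rw [cf_eq_fourierCoeff_of_ae hcoe, h_conj,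
      fourierCoeff_conj_mul_eq_zero_of_mem_Kmod hθ.memLinf ha (by omega), map_zero]
  have h_unimod : ⟪mulLM θ h, mulLM θ (conjL2 a)⟫ = conj ⟪conjL2 h, a⟫ := by
    rw [inner_eq_integral, inner_eq_integral, ← integral_conj]
    refine integral_congr_ae ?_
    filter_upwards [coeFn_mulLM hθ.memLinf h, hcoe, coeFn_conjL2 h, hθ.unimodular]
      with x e1 e2 e3 e4
    rw [e1, e2, e3]
    simp only [map_mul, Complex.conj_conj]
    linear_combination conj (h x) * conj (a x) * conj_mul_self_of_norm_eq_one e4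
  have h_single : ⟪conjL2 h, a⟫ = cf h 0 * cf a 0 := by
    rw [inner_eq_conj_cf_zero_mul_cf_zero fun n hn => ?_, cf_conjL2, neg_zero,
      Complex.conj_conj]
    rcases hn.lt_or_gt with hn | hn
    · rw [mem_coeffGE.mp (mem_Kmod_iff.mp ha).1 n hn, mul_zero]
    · rw [cf_conjL2, mem_coeffGE.mp hh (-n) (by omega), map_zero, map_zero, zero_mul]
  rw [inner_sub_right, inner_smul_right, h_unimod, h_single, inner_mulLM_mulLM_fourE_zero hθ,
    map_mul]
  ring

lemma mulLM_zbar_mem_Kmod {θ : Tc → ℂ} (hθ : MemLp θ ⊤ μ0) {f : L2} (hf : f ∈ Kmod θ)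
    (hf0 : cf f 0 = 0) : mulLM zbar f ∈ Kmod θ := by
  refine mem_Kmod_iff.mpr ⟨mem_coeffGE.mpr fun n hn => ?_, fun h hh => ?_⟩
  · rw [cf_mulLM_zbar]
    rcases (show n + 1 ≤ 0 by omega).eq_or_lt with hn | hn
    · rwa [hn]
    · exact mem_coeffGE.mp (mem_Kmod_iff.mp hf).1 _ hn
  rw [← (mem_Kmod_iff.mp hf).2 _ (mulLM_zf_mem_H2 hh)]
  refine inner_eq_inner_of_ae ?_
  filter_upwards [coeFn_mulLM hθ h, coeFn_mulLM memLp_zbar f, coeFn_mulLM hθ (mulLM zf h),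
    coeFn_mulLM memLp_zf h] with x e1 e2 e3 e4
  rw [e1, e2, e3, e4]
  simp only [map_mul, zbar, zf, ← fourier_neg]
  ring

lemma Sstar_eq_mulLM_zbar {f : L2} (hf : mulLM zbar f ∈ H2) : Sstar f = mulLM zbar f := by
  let _ : CompleteSpace H2 := (isClosed_coeffGE 0).completeSpace_coe
  exact Submodule.starProjection_eq_self_iff.mpr hf

lemma inner_mulLM_fourE_zero_mulLM_eq_zero {θ g : Tc → ℂ} (hθ : IsInner θ)
    (hg : MemLp g ⊤ μ0) {f f₁ : L2} (hf : f ∈ kerA θ g) (hf0 : cf f 0 = 0)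
    (hf₁ : f₁ ∈ kerA θ g) (hf₁0 : cf f₁ 0 ≠ 0) :
    ⟪mulLM θ (fourE 0), mulLM g f⟫ = 0 := by
  have h_orth : ∀ {u v : L2}, u ∈ kerA θ g → v ∈ Kmod θ → ⟪v, mulLM g u⟫ = 0 :=
    fun hu hv => (Submodule.mem_orthogonal _ _).mp (Submodule.mem_comap.mp hu.2) _ hv
  have h_f : ⟪mulLM θ (conjL2 f), mulLM g f₁⟫ = 0 := by
    have h := mulLM_conjL2_sub_smul_mem_Kmod hθ hf.1
    rw [hf0, map_zero, zero_smul, sub_zero] at h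
    exact h_orth hf₁ h
  have h_f₁ := h_orth hf (mulLM_conjL2_sub_smul_mem_Kmod hθ hf₁.1)
  have h_symm : ⟪mulLM θ (conjL2 f₁), mulLM g f⟫ = ⟪mulLM θ (conjL2 f), mulLM g f₁⟫ := by
    refine inner_eq_inner_of_ae ?_
    filter_upwards [coeFn_mulLM hθ.memLinf (conjL2 f₁), coeFn_conjL2 f₁,
      coeFn_mulLM hθ.memLinf (conjL2 f), coeFn_conjL2 f, coeFn_mulLM hg f, coeFn_mulLM hg f₁]
      with x e1 e2 e3 e4 e5 e6
    rw [e1, e2, e3, e4, e5, e6]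
    simp only [map_mul, Complex.conj_conj]
    ring
  rw [inner_sub_left, inner_smul_left, Complex.conj_conj, h_symm, h_f, zero_sub,
    neg_eq_zero] at h_f₁
  exact (mul_eq_zero.mp h_f₁).resolve_left hf₁0

/-- **Theorem 4.3.**  If `ker A_g^θ` contains a function which does not vanish at `0`,
then `ker A_g^θ` is a nearly `S*`-invariant subspace of `H²`. -/
theorem kernel_truncated_toeplitz_nearly_invariant
    (θ g : Tc → ℂ) (hθ : IsInner θ) (hg : MemLp g ⊤ μ0)
    (hex : ∃ f ∈ kerA θ g, cf f 0 ≠ 0) :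
    ∀ f ∈ kerA θ g, cf f 0 = 0 → Sstar f ∈ kerA θ g := by
  obtain ⟨f₁, hf₁, hf₁0⟩ := hex
  intro f hf hf0
  have hK : mulLM zbar f ∈ Kmod θ := mulLM_zbar_mem_Kmod hθ.memLinf hf.1 hf0
  have hθ_perp := inner_mulLM_fourE_zero_mulLM_eq_zero hθ hg hf hf0 hf₁ hf₁0
  rw [Sstar_eq_mulLM_zbar (mem_Kmod_iff.mp hK).1]
  refine ⟨hK, (Submodule.mem_orthogonal _ _).mpr fun k hk => ?_⟩
  obtain ⟨c, hc⟩ := exists_mulLM_zf_sub_smul_mem_Kmod hθ hk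
  have h_shift : ⟪k, mulLM g (mulLM zbar f)⟫ = ⟪mulLM zf k, mulLM g f⟫ := by
    refine inner_eq_inner_of_ae ?_
    filter_upwards [coeFn_mulLM hg (mulLM zbar f), coeFn_mulLM memLp_zbar f,
      coeFn_mulLM memLp_zf k, coeFn_mulLM hg f] with x e1 e2 e3 e4
    rw [e1, e2, e3, e4]
    simp only [map_mul, zbar, zf, ← fourier_neg]
    ring
  have h_split : mulLM zf k = (mulLM zf k - c • mulLM θ (fourE 0)) + c • mulLM θ (fourE 0) := by
    abel
  rw [h_shift, h_split, inner_add_left, inner_smul_left,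
    (Submodule.mem_orthogonal _ _).mp hf.2 _ hc, hθ_perp, mul_zero, add_zero]

end Paper
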